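/- arXiv:2206.03863 — 7 statements merged into one kernel-verified Lean document; each statement's English description precedes it below -/
import Mathlib

section
/- Let g be a symmetric n×n real matrix and φ ∈ ℝ with every eigenvalue of φg less than 1. Suppose the largest eigenvalue λ₁(φg) of φg is simple, with unit eigenvector u satisfying u_i ≠ 0 for all i. Let C > 0 and let a* maximize aᵀ (I − φg)⁻² a over {a ∈ ℝⁿ : ‖a‖² ≤ C}. Define equilibrium actions x* = (I − φg)⁻¹ a* and payoffs π_i = ½ (x*_i)². Then all π_i are strictly positive and the Theil index of the payoff vector satisfies T = (1/n) Σ_{i=1}^n (π_i/π̄) ln(π_i/π̄) = Σ_{i=1}^n u_i² ln(n u_i²), where π̄ = (1/n) Σ_{i=1}^n π_i. -/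
/-!
Write `P = 1 - φg` and `s = 1 - λ₁ > 0`. Since every eigenvalue of `φg` is at most `λ₁`, the matrix
`P - s` is positive semidefinite, and expanding `‖Px‖² = ‖(P - s)x + sx‖²` gives
`‖Px‖² ≥ s²‖x‖²`, with equality only if `Px = sx`. With `x = P⁻¹a` the welfare `‖P⁻¹a‖²` is
therefore at most `‖a‖² / s² ≤ C / s²`, a value attained at `√C u`. A maximizer `a*` thus attains
both bounds: it is a `λ₁`-eigenvector with `‖a*‖² = C`, so `a* = c u` with `c² = C` by simplicity.
Then `x* = (c / s) u`, the payoffs are proportional to `uᵢ²`, and the Theil index, being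
scale invariant, only sees the distribution `(uᵢ²)`.
-/

open Matrix

/-- `μ` is a (real) eigenvalue of the matrix `M`. -/
def hasEigen {n : ℕ} (M : Matrix (Fin n) (Fin n) ℝ) (μ : ℝ) : Prop :=
  ∃ v : Fin n → ℝ, v ≠ 0 ∧ M.mulVec v = μ • v

namespace Matrix

section HasEigen

variable {n : ℕ} {M : Matrix (Fin n) (Fin n) ℝ}

theorem IsHermitian.hasEigen_eigenvalues (hM : M.IsHermitian) (k : Fin n) :
    hasEigen M (hM.eigenvalues k) := by
  refine ⟨_, fun h => hM.eigenvectorBasis.orthonormal.ne_zero k ?_, hM.mulVec_eigenvectorBasis k⟩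
  exact WithLp.ofLp_injective 2 h

theorem IsSymm.posSemidef_smul_one_sub (hM : M.IsSymm) {lam : ℝ}
    (hle : ∀ μ, hasEigen M μ → μ ≤ lam) : (lam • 1 - M).PosSemidef := by
  have hH : (lam • 1 - M).IsHermitian :=
    isHermitian_iff_isSymm.mpr ((isSymm_one.smul lam).sub hM)
  refine hH.posSemidef_iff_eigenvalues_nonneg.mpr fun k => ?_
  show 0 ≤ hH.eigenvalues k
  obtain ⟨v, hv0, hv⟩ := hH.hasEigen_eigenvalues k
  have hMv : M *ᵥ v = (lam - hH.eigenvalues k) • v := by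
    rw [sub_mulVec, smul_mulVec, one_mulVec] at hv
    rw [sub_smul, ← hv]
    abel
  linarith [hle _ ⟨v, hv0, hMv⟩]

end HasEigen

variable {ι : Type*} [Fintype ι] [DecidableEq ι] {P : Matrix ι ι ℝ} {s : ℝ}

theorem dotProduct_sq_mulVec_of_transpose_eq {R : Type*} [CommSemiring R] {B : Matrix ι ι R}
    (hB : Bᵀ = B) (a : ι → R) : a ⬝ᵥ (B ^ 2 *ᵥ a) = (B *ᵥ a) ⬝ᵥ (B *ᵥ a) := by
  rw [pow_two, ← mulVec_mulVec, dotProduct_mulVec, ← mulVec_transpose, hB]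

theorem inv_mulVec_eq_smul_of_mulVec_eq_smul (hP : IsUnit P.det) (hs : s ≠ 0) {v : ι → ℝ}
    (hv : P *ᵥ v = s • v) : P⁻¹ *ᵥ v = s⁻¹ • v := by
  calc P⁻¹ *ᵥ v = s⁻¹ • P⁻¹ *ᵥ (P *ᵥ v) := by
        rw [hv, mulVec_smul, smul_smul, inv_mul_cancel₀ hs, one_smul]
    _ = s⁻¹ • v := by rw [mulVec_mulVec, nonsing_inv_mul _ hP, one_mulVec]

namespace PosSemidef

theorem dotProduct_self_sub_smul_add_le (hP : (P - s • 1).PosSemidef) (hs : 0 ≤ s)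
    (x : ι → ℝ) :
    ((P - s • 1) *ᵥ x) ⬝ᵥ ((P - s • 1) *ᵥ x) + s ^ 2 * (x ⬝ᵥ x) ≤ (P *ᵥ x) ⬝ᵥ (P *ᵥ x) := by
  have hDx : 0 ≤ x ⬝ᵥ ((P - s • 1) *ᵥ x) := by simpa using hP.dotProduct_mulVec_nonneg x
  have hPx : P *ᵥ x = (P - s • 1) *ᵥ x + s • x := by
    rw [sub_mulVec, smul_mulVec, one_mulVec, sub_add_cancel]
  rw [hPx]
  simp only [add_dotProduct, dotProduct_add, smul_dotProduct, dotProduct_smul, smul_eq_mul,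
    dotProduct_comm _ x]
  nlinarith

theorem sq_mul_dotProduct_self_le (hP : (P - s • 1).PosSemidef) (hs : 0 ≤ s) (x : ι → ℝ) :
    s ^ 2 * (x ⬝ᵥ x) ≤ (P *ᵥ x) ⬝ᵥ (P *ᵥ x) :=
  (le_add_of_nonneg_left (by simpa using dotProduct_star_self_nonneg ((P - s • 1) *ᵥ x))).trans
    (hP.dotProduct_self_sub_smul_add_le hs x)

theorem mulVec_eq_smul_of_dotProduct_self_le (hP : (P - s • 1).PosSemidef) (hs : 0 ≤ s)
    {x : ι → ℝ} (h : (P *ᵥ x) ⬝ᵥ (P *ᵥ x) ≤ s ^ 2 * (x ⬝ᵥ x)) : P *ᵥ x = s • x := by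
  have hle := hP.dotProduct_self_sub_smul_add_le hs x
  have hnonneg : 0 ≤ ((P - s • 1) *ᵥ x) ⬝ᵥ ((P - s • 1) *ᵥ x) := by
    simpa using dotProduct_star_self_nonneg ((P - s • 1) *ᵥ x)
  have hD : (P - s • 1) *ᵥ x = 0 := dotProduct_self_eq_zero.mp (by linarith)
  rwa [sub_mulVec, smul_mulVec, one_mulVec, sub_eq_zero] at hD

theorem isUnit_det_of_sub (hP : (P - s • 1).PosSemidef) (hs : 0 < s) : IsUnit P.det := by
  have hPdef : P.PosDef := by simpa using PosDef.posSemidef_add hP (PosDef.one.smul hs)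
  exact (isUnit_iff_isUnit_det P).mp hPdef.isUnit

theorem mulVec_eq_smul_of_isMaxOn (hP : (P - s • 1).PosSemidef) (hs : 0 < s) {u : ι → ℝ}
    (hu : P *ᵥ u = s • u) (hu1 : u ⬝ᵥ u = 1) {C : ℝ} (hC : 0 ≤ C) {a : ι → ℝ}
    (hmax : IsMaxOn (fun b => b ⬝ᵥ (P⁻¹ ^ 2 *ᵥ b)) {b | b ⬝ᵥ b ≤ C} a) (ha : a ⬝ᵥ a ≤ C) :
    P *ᵥ a = s • a ∧ a ⬝ᵥ a = C := by
  have hdet := hP.isUnit_det_of_sub hs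
  have hPT : Pᵀ = P := by
    simpa using ((isHermitian_iff_isSymm.mp hP.isHermitian).add (isSymm_one.smul s)).eq
  have hPinvT : P⁻¹ᵀ = P⁻¹ := by rw [transpose_nonsing_inv, hPT]
  set x := P⁻¹ *ᵥ a
  have hx : P *ᵥ x = a := by rw [mulVec_mulVec, mul_nonsing_inv _ hdet, one_mulVec]
  have hcand : s ^ 2 * ((√C • u) ⬝ᵥ (P⁻¹ ^ 2 *ᵥ (√C • u))) = C := by
    rw [dotProduct_sq_mulVec_of_transpose_eq hPinvT, mulVec_smul,
      inv_mulVec_eq_smul_of_mulVec_eq_smul hdet hs.ne' hu]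
    simp only [smul_dotProduct, dotProduct_smul, hu1, smul_eq_mul]
    field_simp
    rw [Real.sq_sqrt hC]
  have hfeas : (√C • u) ⬝ᵥ (√C • u) ≤ C := by
    simp [smul_dotProduct, dotProduct_smul, hu1, Real.mul_self_sqrt hC]
  have hge : C ≤ s ^ 2 * (x ⬝ᵥ x) := by
    rw [← hcand, ← dotProduct_sq_mulVec_of_transpose_eq hPinvT a]
    gcongr
    exact hmax hfeas
  have hle : s ^ 2 * (x ⬝ᵥ x) ≤ a ⬝ᵥ a := hx ▸ hP.sq_mul_dotProduct_self_le hs.le x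
  have hPx : P *ᵥ x = s • x :=
    hP.mulVec_eq_smul_of_dotProduct_self_le hs.le (by rw [hx]; linarith)
  refine ⟨?_, by linarith⟩
  rw [← hx, hPx, mulVec_smul, hPx]

end PosSemidef

end Matrix

noncomputable def theilIndex {n : ℕ} (v : Fin n → ℝ) : ℝ :=
  let vbar := (∑ i, v i) / n
  (1 / (n : ℝ)) * ∑ i, (v i / vbar) * Real.log (v i / vbar)

theorem theilIndex_const_mul {n : ℕ} {w : Fin n → ℝ} (hw : ∑ i, w i = 1) {K : ℝ} (hK : K ≠ 0) :
    theilIndex (fun i => K * w i) = ∑ i, w i * Real.log (n * w i) := by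
  have hn : (n : ℝ) ≠ 0 := by
    rintro h
    obtain rfl : n = 0 := by exact_mod_cast h
    simp at hw
  have hratio : ∀ i, K * w i / ((∑ j, K * w j) / n) = n * w i := by
    intro i
    rw [← Finset.mul_sum, hw]
    field_simp
  simp only [theilIndex, hratio, Finset.mul_sum]
  refine Finset.sum_congr rfl fun i _ => ?_
  field_simp

theorem stmt7_general (n : ℕ) (g : Matrix (Fin n) (Fin n) ℝ) (hg : g.IsSymm)
    (φ : ℝ) (heig : ∀ μ : ℝ, hasEigen (φ • g) μ → μ < 1)
    (lam1 : ℝ) (u : Fin n → ℝ)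
    (hu_eig : (φ • g).mulVec u = lam1 • u)
    (hu_unit : (∑ i, u i ^ 2) = 1)
    (hmax : ∀ μ : ℝ, hasEigen (φ • g) μ → μ ≤ lam1)
    (hsimple : ∀ v : Fin n → ℝ, (φ • g).mulVec v = lam1 • v → ∃ c : ℝ, v = c • u)
    (hu_ne : ∀ i, u i ≠ 0)
    (C : ℝ) (hC : 0 < C)
    (astar : Fin n → ℝ)
    (hfeas : (∑ i, astar i ^ 2) ≤ C)
    (hopt : ∀ a : Fin n → ℝ, (∑ i, a i ^ 2) ≤ C →
      a ⬝ᵥ (((1 - φ • g)⁻¹ ^ 2).mulVec a)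
        ≤ astar ⬝ᵥ (((1 - φ • g)⁻¹ ^ 2).mulVec astar)) :
    let xstar : Fin n → ℝ := (1 - φ • g)⁻¹.mulVec astar
    let pay : Fin n → ℝ := fun i => xstar i ^ 2 / 2
    let paybar : ℝ := (∑ i, pay i) / n
    (∀ i, 0 < pay i) ∧
    (1 / (n : ℝ)) * ∑ i, (pay i / paybar) * Real.log (pay i / paybar)
      = ∑ i, u i ^ 2 * Real.log ((n : ℝ) * u i ^ 2) := by
  intro xstar pay paybar
  set s := 1 - lam1
  have hsq : ∀ v : Fin n → ℝ, v ⬝ᵥ v = ∑ i, v i ^ 2 := fun v => by simp [dotProduct, sq]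
  have hu1 : u ⬝ᵥ u = 1 := by rw [hsq, hu_unit]
  have hs : 0 < s := by
    linarith [heig lam1 ⟨u, by rintro rfl; simp at hu1, hu_eig⟩]
  have hP : (1 - φ • g - s • 1).PosSemidef := by
    convert (hg.smul φ).posSemidef_smul_one_sub hmax using 1
    module
  have hPu : (1 - φ • g) *ᵥ u = s • u := by
    rw [sub_mulVec, one_mulVec, hu_eig]
    module
  obtain ⟨ha_eig, ha_norm⟩ := hP.mulVec_eq_smul_of_isMaxOn hs hPu hu1 hC.le
    (fun b hb => hopt b (by rw [← hsq]; exact hb)) (by rw [hsq]; exact hfeas)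
  obtain ⟨c, hc⟩ := hsimple astar (by
    rw [sub_mulVec, one_mulVec] at ha_eig
    linear_combination (norm := module) -ha_eig)
  have hc2 : c ^ 2 = C := by
    rw [← ha_norm, hc, smul_dotProduct, dotProduct_smul, hu1]
    simp [sq]
  have hx : xstar = (c / s) • u := by
    simp only [xstar, hc, mulVec_smul,
      inv_mulVec_eq_smul_of_mulVec_eq_smul (hP.isUnit_det_of_sub hs) hs.ne' hPu, smul_smul,
      div_eq_mul_inv]
  have hpay : pay = fun i => (c / s) ^ 2 / 2 * u i ^ 2 := by
    funext i
    simp only [pay, hx, Pi.smul_apply, smul_eq_mul]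
    ring
  have hc0 : c ≠ 0 := by
    rintro rfl
    simp at hc2
    linarith
  refine ⟨fun i => ?_, ?_⟩
  · have := hu_ne i
    rw [hpay]
    positivity
  · show theilIndex pay = _
    rw [hpay]
    exact theilIndex_const_mul hu_unit (by positivity)

/-- If the largest eigenvalue `λ₁(φg)` is simple with unit eigenvector `u` having all entries
nonzero, and `a*` maximizes welfare over `‖a‖² ≤ C` (C > 0), then equilibrium payoffs
`πᵢ = ½(x*ᵢ)²` are strictly positive, and the Theil T index of the payoff vector equals
`Σᵢ uᵢ² ln(n uᵢ²)`. -/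
theorem stmt7 (n : ℕ) (hn : 0 < n) (g : Matrix (Fin n) (Fin n) ℝ) (hg : g.IsSymm)
    (φ : ℝ) (heig : ∀ μ : ℝ, hasEigen (φ • g) μ → μ < 1)
    (lam1 : ℝ) (u : Fin n → ℝ)
    (hu_eig : (φ • g).mulVec u = lam1 • u)
    (hu_unit : (∑ i, u i ^ 2) = 1)
    (hmax : ∀ μ : ℝ, hasEigen (φ • g) μ → μ ≤ lam1)
    (hsimple : ∀ v : Fin n → ℝ, (φ • g).mulVec v = lam1 • v → ∃ c : ℝ, v = c • u)
    (hu_ne : ∀ i, u i ≠ 0)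
    (C : ℝ) (hC : 0 < C)
    (astar : Fin n → ℝ)
    (hfeas : (∑ i, astar i ^ 2) ≤ C)
    (hopt : ∀ a : Fin n → ℝ, (∑ i, a i ^ 2) ≤ C →
      a ⬝ᵥ (((1 - φ • g)⁻¹ ^ 2).mulVec a)
        ≤ astar ⬝ᵥ (((1 - φ • g)⁻¹ ^ 2).mulVec astar)) :
    let xstar : Fin n → ℝ := (1 - φ • g)⁻¹.mulVec astar
    let pay : Fin n → ℝ := fun i => xstar i ^ 2 / 2
    let paybar : ℝ := (∑ i, pay i) / n
    (∀ i, 0 < pay i) ∧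
    (1 / (n : ℝ)) * ∑ i, (pay i / paybar) * Real.log (pay i / paybar)
      = ∑ i, u i ^ 2 * Real.log ((n : ℝ) * u i ^ 2) :=
  stmt7_general n g hg φ heig lam1 u hu_eig hu_unit hmax hsimple hu_ne C hC astar hfeas hopt
end

section
/- Fix an integer n ≥ 2 and w̄ > 0, and let g ∈ 𝒢ₙ. Then every real eigenvalue of g is at most w̄(n−1); moreover, if w̄(n−1) is an eigenvalue of g, then g_{ij} = w̄ for all i ≠ j, i.e., g is the complete network w̄K_n. -/
open Matrix

/-- The set `𝒢ₙ` of symmetric `n×n` networks with zero diagonal and weights in `[0, w̄]`. -/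
def Gset (n : ℕ) (w : ℝ) : Set (Matrix (Fin n) (Fin n) ℝ) :=
  {g | g.IsSymm ∧ (∀ i, g i i = 0) ∧ ∀ i j, 0 ≤ g i j ∧ g i j ≤ w}

/-- Lemma 2(i): every real eigenvalue of `g ∈ 𝒢ₙ` is at most `w̄(n−1)`, with equality only
for the complete network `w̄ Kₙ`. -/
theorem stmt10 (n : ℕ) (hn : 2 ≤ n) (w : ℝ) (hw : 0 < w)
    (g : Matrix (Fin n) (Fin n) ℝ) (hg : g ∈ Gset n w) :
    (∀ μ : ℝ, hasEigen g μ → μ ≤ w * ((n : ℝ) - 1)) ∧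
    (hasEigen g (w * ((n : ℝ) - 1)) → ∀ i j : Fin n, i ≠ j → g i j = w) := by
  obtain ⟨hsym, hdiag, hbd⟩ := hg
  haveI : NeZero n := ⟨by omega⟩
  have hcard : ∀ i : Fin n, ((Finset.univ.erase i).card : ℝ) = (n : ℝ) - 1 := by
    intro i
    rw [Finset.card_erase_of_mem (Finset.mem_univ i), Finset.card_univ, Fintype.card_fin]
    have h1 : 1 ≤ n := by omega
    push_cast [h1]
    ring
  -- common facts for an eigenpair
  have key : ∀ (μ : ℝ) (v : Fin n → ℝ), v ≠ 0 → g.mulVec v = μ • v →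
      ∃ i0 : Fin n, 0 < |v i0| ∧ (∀ j, |v j| ≤ |v i0|) ∧
        ∀ i, |μ| * |v i| ≤ ∑ j ∈ Finset.univ.erase i, g i j * |v j| := by
    intro μ v hv heig
    obtain ⟨i0, -, hi0⟩ := Finset.exists_max_image Finset.univ (fun i => |v i|)
      Finset.univ_nonempty
    have hmax : ∀ j, |v j| ≤ |v i0| := fun j => hi0 j (Finset.mem_univ j)
    have hpos : 0 < |v i0| := by
      obtain ⟨j, hj⟩ := Function.ne_iff.mp hv
      exact lt_of_lt_of_le (abs_pos.mpr hj) (hmax j)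
    refine ⟨i0, hpos, hmax, fun i => ?_⟩
    have heq : ∑ j ∈ Finset.univ.erase i, g i j * v j = μ * v i := by
      rw [Finset.sum_erase _ (by rw [hdiag i]; ring)]
      have := congrFun heig i
      simpa [Matrix.mulVec, dotProduct] using this
    calc |μ| * |v i| = |∑ j ∈ Finset.univ.erase i, g i j * v j| := by
          rw [heq, abs_mul]
      _ ≤ ∑ j ∈ Finset.univ.erase i, |g i j * v j| := Finset.abs_sum_le_sum_abs _ _
      _ = ∑ j ∈ Finset.univ.erase i, g i j * |v j| := by
          refine Finset.sum_congr rfl fun j _ => ?_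
          rw [abs_mul, abs_of_nonneg (hbd i j).1]
  have hub : ∀ (c : Fin n → ℝ) (i : Fin n) (m : ℝ), 0 ≤ m →
      (∀ j, 0 ≤ c j ∧ c j ≤ w * m) →
      ∑ j ∈ Finset.univ.erase i, c j ≤ w * ((n : ℝ) - 1) * m := by
    intro c i m hm hc
    calc ∑ j ∈ Finset.univ.erase i, c j ≤ ∑ _j ∈ Finset.univ.erase i, w * m :=
          Finset.sum_le_sum fun j _ => (hc j).2
      _ = ((Finset.univ.erase i).card : ℝ) * (w * m) := by
          rw [Finset.sum_const, nsmul_eq_mul]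
      _ = w * ((n : ℝ) - 1) * m := by rw [hcard i]; ring
  constructor
  · rintro μ ⟨v, hv, heig⟩
    obtain ⟨i0, hpos, hmax, hrow⟩ := key μ v hv heig
    have h1 : |μ| * |v i0| ≤ w * ((n : ℝ) - 1) * |v i0| := by
      refine (hrow i0).trans (hub _ i0 (|v i0|) hpos.le fun j => ?_)
      exact ⟨mul_nonneg (hbd i0 j).1 (abs_nonneg _),
        mul_le_mul (hbd i0 j).2 (hmax j) (abs_nonneg _) hw.le⟩
    have := le_of_mul_le_mul_right h1 hpos
    exact (le_abs_self μ).trans this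
  · rintro ⟨v, hv, heig⟩ i j hij
    set μ := w * ((n : ℝ) - 1) with hμ
    have hμpos : 0 < μ := by
      apply mul_pos hw
      have : (2 : ℝ) ≤ (n : ℝ) := by exact_mod_cast hn
      linarith
    obtain ⟨i0, hpos, hmax, hrow⟩ := key μ v hv heig
    set m := |v i0| with hm
    -- row i0: termwise equality gives |v j| = m for all j
    have hsum0 : ∑ k ∈ Finset.univ.erase i0, g i0 k * |v k|
        = ∑ k ∈ Finset.univ.erase i0, w * m := by
      have hle : ∑ k ∈ Finset.univ.erase i0, g i0 k * |v k| ≤ μ * m := by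
        have := hub (fun k => g i0 k * |v k|) i0 m hpos.le fun k =>
          ⟨mul_nonneg (hbd i0 k).1 (abs_nonneg _),
            mul_le_mul (hbd i0 k).2 (hmax k) (abs_nonneg _) hw.le⟩
        calc ∑ k ∈ Finset.univ.erase i0, g i0 k * |v k| ≤ w * ((n:ℝ)-1) * m := this
          _ = μ * m := by rw [hμ]
      have hge : μ * m ≤ ∑ k ∈ Finset.univ.erase i0, g i0 k * |v k| := by
        have := hrow i0
        rwa [abs_of_pos hμpos] at this
      have hconst : ∑ _k ∈ Finset.univ.erase i0, w * m = μ * m := by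
        rw [Finset.sum_const, nsmul_eq_mul, hcard i0, hμ]; ring
      rw [hconst]; linarith
    have hterm0 : ∀ k ∈ Finset.univ.erase i0, g i0 k * |v k| = w * m := by
      rw [← Finset.sum_eq_sum_iff_of_le fun k _ =>
        mul_le_mul (hbd i0 k).2 (hmax k) (abs_nonneg _) hw.le]
      exact hsum0
    have hvk : ∀ k, |v k| = m := by
      intro k
      by_cases hk : k = i0
      · rw [hk]
      · have h := hterm0 k (Finset.mem_erase.mpr ⟨hk, Finset.mem_univ k⟩)
        have h2 : g i0 k * |v k| ≤ w * |v k| :=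
          mul_le_mul_of_nonneg_right (hbd i0 k).2 (abs_nonneg _)
        have h3 : w * |v k| ≤ w * m := mul_le_mul_of_nonneg_left (hmax k) hw.le
        have : w * |v k| = w * m := le_antisymm h3 (by linarith)
        exact mul_left_cancel₀ hw.ne' this
    -- row i: termwise equality gives g i k = w for k ≠ i
    have hsumi : ∑ k ∈ Finset.univ.erase i, g i k * |v k|
        = ∑ k ∈ Finset.univ.erase i, w * m := by
      have hle : ∑ k ∈ Finset.univ.erase i, g i k * |v k| ≤ μ * m := by
        have := hub (fun k => g i k * |v k|) i m hpos.le fun k =>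
          ⟨mul_nonneg (hbd i k).1 (abs_nonneg _),
            mul_le_mul (hbd i k).2 (hmax k) (abs_nonneg _) hw.le⟩
        calc ∑ k ∈ Finset.univ.erase i, g i k * |v k| ≤ w * ((n:ℝ)-1) * m := this
          _ = μ * m := by rw [hμ]
      have hge : μ * m ≤ ∑ k ∈ Finset.univ.erase i, g i k * |v k| := by
        have := hrow i
        rwa [abs_of_pos hμpos, hvk i] at this
      have hconst : ∑ _k ∈ Finset.univ.erase i, w * m = μ * m := by
        rw [Finset.sum_const, nsmul_eq_mul, hcard i, hμ]; ring
      rw [hconst]; linarith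
    have htermi : ∀ k ∈ Finset.univ.erase i, g i k * |v k| = w * m := by
      rw [← Finset.sum_eq_sum_iff_of_le fun k _ =>
        mul_le_mul (hbd i k).2 (hmax k) (abs_nonneg _) hw.le]
      exact hsumi
    have h := htermi j (Finset.mem_erase.mpr ⟨(Ne.symm hij), Finset.mem_univ j⟩)
    rw [hvk j] at h
    exact mul_right_cancel₀ (ne_of_gt hpos) h
end

section
/- Fix an integer n ≥ 2 and w̄ > 0, and let g ∈ 𝒢ₙ. Then every real eigenvalue of g is at least −w̄√(⌊n/2⌋⌈n/2⌉); moreover, if −w̄√(⌊n/2⌋⌈n/2⌉) is an eigenvalue of g, then there exists a subset S ⊆ {1,…,n} with |S| = ⌊n/2⌋ such that for all i ≠ j, g_{ij} = w̄ if exactly one of i, j lies in S, and g_{ij} = 0 otherwise; i.e., g is isomorphic to the complete balanced bipartite network w̄K_{⌊n/2⌋,⌈n/2⌉}. -/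
open Matrix

/-!
Let `g v = μ v` with `v ≠ 0` and let `S` be the set where `v ≥ 0`, with `k = |S|`, `l = |Sᶜ|`.
Since `vᵢvⱼ ≥ 0` inside the parts and `vᵢvⱼ ≤ 0` across them, the quadratic form of `g` at `v`
dominates, term by term, that of the complete bipartite network `w K_{S,Sᶜ}`, which is `2wxy` with
`x`, `y` the sums of `v` over `S` and `Sᶜ`. The sum of squares
`∑_{i ∈ S, j ∈ Sᶜ} (√k vᵢ + √l vⱼ)² = √(kl) (√(kl) ‖v‖² + 2xy)` gives
`2xy ≥ -√(kl) ‖v‖² ≥ -√(⌊n/2⌋⌈n/2⌉) ‖v‖²`. If `μ` attains the bound, every step is tight: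
`kl = ⌊n/2⌋⌈n/2⌉` fixes the sizes of the parts, the vanishing squares make `v` constant and nonzero
on each part, and then termwise equality forces `g = w K_{S,Sᶜ}`.
-/

open Finset

namespace Nat

theorem mul_le_div_two_mul_add_one_div_two {k l n : ℕ} (h : k + l = n) :
    k * l ≤ n / 2 * ((n + 1) / 2) := by
  have hk : k ≤ n / 2 ∨ (n + 1) / 2 ≤ k := by omega
  have hn : n / 2 + (n + 1) / 2 = n := by omega
  have hpq : n / 2 ≤ (n + 1) / 2 := by omega
  generalize n / 2 = p, (n + 1) / 2 = q at *
  zify at *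
  rcases hk with hk | hk
  · nlinarith [mul_nonneg (sub_nonneg.2 hk) (sub_nonneg.2 (hk.trans hpq))]
  · nlinarith [mul_nonneg (sub_nonneg.2 hk) (sub_nonneg.2 (hpq.trans hk))]

theorem eq_div_two_of_mul_eq {k l n : ℕ} (h : k + l = n) (he : k * l = n / 2 * ((n + 1) / 2)) :
    k = n / 2 ∨ l = n / 2 := by
  have hn : n / 2 + (n + 1) / 2 = n := by omega
  have hq : (n + 1) / 2 ≤ n / 2 + 1 := by omega
  generalize n / 2 = p, (n + 1) / 2 = q at *
  have hkpq : ((k : ℤ) - p) * (k - q) = 0 := by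
    zify at h he hn
    linear_combination (k : ℤ) * h - he - k * hn
  rcases _root_.mul_eq_zero.1 hkpq with hk | hk <;> omega

end Nat

theorem Finset.sum_sum_add_sq {ι : Type*} (S T : Finset ι) (a b : ℝ) (v : ι → ℝ) :
    ∑ i ∈ S, ∑ j ∈ T, (a * v i + b * v j) ^ 2 =
      a ^ 2 * #T * ∑ i ∈ S, v i ^ 2 + b ^ 2 * #S * ∑ j ∈ T, v j ^ 2 +
        2 * a * b * ((∑ i ∈ S, v i) * ∑ j ∈ T, v j) := by
  simp only [add_sq, sum_add_distrib, ← mul_sum, ← sum_mul, sum_const, nsmul_eq_mul, mul_pow]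
  ring

section

variable {ι : Type*} [Fintype ι]

theorem Matrix.dotProduct_mulVec_eq_sum (M : Matrix ι ι ℝ) (v : ι → ℝ) :
    v ⬝ᵥ M *ᵥ v = ∑ i, ∑ j, M i j * (v i * v j) := by
  simp only [dotProduct, mulVec, mul_sum]
  exact sum_congr rfl fun i _ => sum_congr rfl fun j _ => by ring

theorem sum_sq_pos_of_ne_zero {v : ι → ℝ} (hv : v ≠ 0) : 0 < ∑ i, v i ^ 2 := by
  obtain ⟨i, hi⟩ := Function.ne_iff.1 hv
  exact sum_pos' (fun j _ => sq_nonneg _) ⟨i, mem_univ i, sq_pos_of_ne_zero hi⟩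

theorem Matrix.dotProduct_mulVec_eq_mul_sum_sq {M : Matrix ι ι ℝ} {μ : ℝ} {v : ι → ℝ}
    (h : M *ᵥ v = μ • v) : v ⬝ᵥ M *ᵥ v = μ * ∑ i, v i ^ 2 := by
  simp [h, dotProduct, mul_sum, sq, mul_left_comm]

variable [DecidableEq ι]

/-- The network `w K_{S,Sᶜ}`. -/
def bipartiteMatrix (S : Finset ι) (w : ℝ) : Matrix ι ι ℝ :=
  of fun i j => if (i ∈ S ↔ j ∈ S) then 0 else w

theorem bipartiteMatrix_compl (S : Finset ι) (w : ℝ) :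
    bipartiteMatrix Sᶜ w = bipartiteMatrix S w := by
  ext i j
  simp [bipartiteMatrix, not_iff_not]

theorem dotProduct_bipartiteMatrix_mulVec (S : Finset ι) (w : ℝ) (v : ι → ℝ) :
    v ⬝ᵥ bipartiteMatrix S w *ᵥ v = 2 * w * ((∑ i ∈ S, v i) * ∑ i ∈ Sᶜ, v i) := by
  have hrow : ∀ i, ∑ j, bipartiteMatrix S w i j * (v i * v j) =
      w * v i * if i ∈ S then ∑ j ∈ Sᶜ, v j else ∑ j ∈ S, v j := by
    intro i
    rw [← sum_add_sum_compl S]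
    by_cases hi : i ∈ S <;>
      simp +contextual [bipartiteMatrix, hi, sum_ite_of_false, mul_sum, mul_assoc, inter_comm]
  rw [dotProduct_mulVec_eq_sum, sum_congr rfl fun i _ => hrow i, ← sum_add_sum_compl S]
  simp +contextual only [↓reduceIte, ← sum_mul, ← mul_sum, mul_ite, mem_compl, not_false_eq_true,
    implies_true, sum_ite_of_false]
  ring

theorem sum_sum_compl_sqrt_card_mul_add_sq (S : Finset ι) (v : ι → ℝ) :
    ∑ i ∈ S, ∑ j ∈ Sᶜ, (√(#S) * v i + √(#Sᶜ) * v j) ^ 2 =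
      √(#S * #Sᶜ) * (√(#S * #Sᶜ) * ∑ i, v i ^ 2 + 2 * ((∑ i ∈ S, v i) * ∑ i ∈ Sᶜ, v i)) := by
  have hk := Real.sq_sqrt (Nat.cast_nonneg (α := ℝ) #S)
  have hl := Real.sq_sqrt (Nat.cast_nonneg (α := ℝ) #Sᶜ)
  rw [sum_sum_add_sq, ← sum_add_sum_compl S (fun i => v i ^ 2), Real.sqrt_mul (by positivity)]
  ring_nf
  rw [hk, hl]
  ring

theorem neg_sqrt_card_mul_le_two_mul_sum_mul_sum_compl (S : Finset ι) (v : ι → ℝ) :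
    -(√(#S * #Sᶜ) * ∑ i, v i ^ 2) ≤ 2 * ((∑ i ∈ S, v i) * ∑ i ∈ Sᶜ, v i) := by
  rcases S.eq_empty_or_nonempty with rfl | hS
  · simp
  rcases Sᶜ.eq_empty_or_nonempty with hSc | hSc
  · simp [hSc]
  have hpos : 0 < √(#S * #Sᶜ) := by
    have := hS.card_pos; have := hSc.card_pos; positivity
  have hsos := sum_sum_compl_sqrt_card_mul_add_sq S v
  have := nonneg_of_mul_nonneg_right
    (hsos ▸ sum_nonneg fun i _ => sum_nonneg fun j _ => sq_nonneg _) hpos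
  linarith

theorem sqrt_card_mul_add_eq_zero_of_two_mul_sum_mul_sum_compl_eq {S : Finset ι} {v : ι → ℝ}
    (h : 2 * ((∑ i ∈ S, v i) * ∑ i ∈ Sᶜ, v i) = -(√(#S * #Sᶜ) * ∑ i, v i ^ 2)) :
    ∀ i ∈ S, ∀ j ∈ Sᶜ, √(#S) * v i + √(#Sᶜ) * v j = 0 := by
  have hsos := sum_sum_compl_sqrt_card_mul_add_sq S v
  rw [h, add_neg_cancel, mul_zero,
    sum_eq_zero_iff_of_nonneg fun i _ => sum_nonneg fun j _ => sq_nonneg _] at hsos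
  intro i hi j hj
  exact pow_eq_zero_iff two_ne_zero |>.1 <|
    (sum_eq_zero_iff_of_nonneg fun j _ => sq_nonneg _).1 (hsos i hi) j hj

theorem apply_ne_zero_of_mul_add_mul_eq_zero {S : Finset ι} (hS : S.Nonempty) (hSc : Sᶜ.Nonempty) {a b : ℝ}
    (ha : a ≠ 0) (hb : b ≠ 0) {v : ι → ℝ} (hv : v ≠ 0)
    (h : ∀ i ∈ S, ∀ j ∈ Sᶜ, a * v i + b * v j = 0) (i : ι) : v i ≠ 0 := by
  have hcross : ∀ i ∈ S, ∀ j ∈ Sᶜ, (v i = 0 ↔ v j = 0) := fun i hi j hj => by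
    have := h i hi j hj
    constructor <;> intro h0 <;> simp_all
  obtain ⟨s, hs⟩ := hS
  obtain ⟨t, ht⟩ := hSc
  intro hi0
  have hst : v s = 0 ∧ v t = 0 := by
    by_cases hiS : i ∈ S
    · have := (hcross i hiS t ht).1 hi0
      exact ⟨(hcross s hs t ht).2 this, this⟩
    · have := (hcross s hs i (mem_compl.2 hiS)).2 hi0
      exact ⟨this, (hcross s hs t ht).1 this⟩
  refine hv (funext fun m => ?_)
  by_cases hm : m ∈ S
  · exact (hcross m hm t ht).2 hst.2
  · exact (hcross s hs m (mem_compl.2 hm)).1 hst.1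

variable {g : Matrix ι ι ℝ} {w : ℝ}

theorem bipartiteMatrix_nonneg_mul_le (hg : ∀ i j, 0 ≤ g i j ∧ g i j ≤ w) (v : ι → ℝ) (i j : ι) :
    bipartiteMatrix {i | 0 ≤ v i} w i j * (v i * v j) ≤ g i j * (v i * v j) := by
  obtain ⟨h0, hw⟩ := hg i j
  by_cases hi : 0 ≤ v i <;> by_cases hj : 0 ≤ v j <;>
    simp only [bipartiteMatrix, of_apply, mem_filter, mem_univ, true_and, hi, hj, iff_self,
      iff_true, iff_false, not_true_eq_false, ↓reduceIte, zero_mul]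
  · exact mul_nonneg h0 (mul_nonneg hi hj)
  · exact mul_le_mul_of_nonpos_right hw (mul_nonpos_of_nonneg_of_nonpos hi (le_of_not_ge hj))
  · exact mul_le_mul_of_nonpos_right hw (mul_nonpos_of_nonpos_of_nonneg (le_of_not_ge hi) hj)
  · exact mul_nonneg h0 (mul_nonneg_of_nonpos_of_nonpos (le_of_not_ge hi) (le_of_not_ge hj))

theorem dotProduct_bipartiteMatrix_nonneg_mulVec_le (hg : ∀ i j, 0 ≤ g i j ∧ g i j ≤ w)
    (v : ι → ℝ) : v ⬝ᵥ bipartiteMatrix {i | 0 ≤ v i} w *ᵥ v ≤ v ⬝ᵥ g *ᵥ v := by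
  rw [dotProduct_mulVec_eq_sum, dotProduct_mulVec_eq_sum]
  exact sum_le_sum fun i _ => sum_le_sum fun j _ => bipartiteMatrix_nonneg_mul_le hg v i j

theorem eq_bipartiteMatrix_nonneg_of_dotProduct_mulVec_eq (hg : ∀ i j, 0 ≤ g i j ∧ g i j ≤ w)
    {v : ι → ℝ} (hv : ∀ i, v i ≠ 0)
    (h : v ⬝ᵥ bipartiteMatrix {i | 0 ≤ v i} w *ᵥ v = v ⬝ᵥ g *ᵥ v) :
    g = bipartiteMatrix {i | 0 ≤ v i} w := by
  rw [dotProduct_mulVec_eq_sum, dotProduct_mulVec_eq_sum, sum_eq_sum_iff_of_le fun i _ =>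
    sum_le_sum fun j _ => bipartiteMatrix_nonneg_mul_le hg v i j] at h
  ext i j
  have hij := (sum_eq_sum_iff_of_le fun j _ => bipartiteMatrix_nonneg_mul_le hg v i j).1
    (h i (mem_univ i)) j (mem_univ j)
  exact (mul_right_cancel₀ (mul_ne_zero (hv i) (hv j)) hij).symm

theorem neg_mul_sqrt_mul_sum_sq_le_dotProduct_mulVec (hw : 0 ≤ w)
    (hg : ∀ i j, 0 ≤ g i j ∧ g i j ≤ w) (v : ι → ℝ) :
    -(w * √((Fintype.card ι / 2 : ℕ) * ((Fintype.card ι + 1) / 2 : ℕ))) * ∑ i, v i ^ 2 ≤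
      v ⬝ᵥ g *ᵥ v := by
  set S : Finset ι := {i | 0 ≤ v i}
  have hcut : √(#S * #Sᶜ) ≤ √((Fintype.card ι / 2 : ℕ) * ((Fintype.card ι + 1) / 2 : ℕ)) :=
    Real.sqrt_le_sqrt (mod_cast Nat.mul_le_div_two_mul_add_one_div_two (card_add_card_compl S))
  have hs : 0 ≤ ∑ i, v i ^ 2 := sum_nonneg fun i _ => sq_nonneg _
  calc _ ≤ w * -(√(#S * #Sᶜ) * ∑ i, v i ^ 2) := by
        nlinarith [mul_le_mul_of_nonneg_left hcut (mul_nonneg hw hs)]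
    _ ≤ w * (2 * ((∑ i ∈ S, v i) * ∑ i ∈ Sᶜ, v i)) :=
        mul_le_mul_of_nonneg_left (neg_sqrt_card_mul_le_two_mul_sum_mul_sum_compl S v) hw
    _ = v ⬝ᵥ bipartiteMatrix S w *ᵥ v := by rw [dotProduct_bipartiteMatrix_mulVec]; ring
    _ ≤ v ⬝ᵥ g *ᵥ v := dotProduct_bipartiteMatrix_nonneg_mulVec_le hg v

theorem exists_card_eq_bipartiteMatrix_of_dotProduct_mulVec_eq (hn : 2 ≤ Fintype.card ι)
    (hw : 0 < w) (hg : ∀ i j, 0 ≤ g i j ∧ g i j ≤ w) {v : ι → ℝ} (hv : v ≠ 0)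
    (h : v ⬝ᵥ g *ᵥ v =
      -(w * √((Fintype.card ι / 2 : ℕ) * ((Fintype.card ι + 1) / 2 : ℕ))) * ∑ i, v i ^ 2) :
    ∃ S : Finset ι, #S = Fintype.card ι / 2 ∧ g = bipartiteMatrix S w := by
  have hle := dotProduct_bipartiteMatrix_nonneg_mulVec_le hg v
  set n := Fintype.card ι
  set S : Finset ι := {i | 0 ≤ v i}
  have hs := sum_sq_pos_of_ne_zero hv
  have hcut : √(#S * #Sᶜ) ≤ √((n / 2 : ℕ) * ((n + 1) / 2 : ℕ)) :=
    Real.sqrt_le_sqrt (mod_cast Nat.mul_le_div_two_mul_add_one_div_two (card_add_card_compl S))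
  have hxy := neg_sqrt_card_mul_le_two_mul_sum_mul_sum_compl S v
  have hB := dotProduct_bipartiteMatrix_mulVec S w v
  -- every inequality in the chain of `neg_mul_sqrt_mul_sum_sq_le_dotProduct_mulVec` is tight
  have hcut_eq : √(#S * #Sᶜ) = √((n / 2 : ℕ) * ((n + 1) / 2 : ℕ)) :=
    le_antisymm hcut <| le_of_mul_le_mul_left (a := w * ∑ i, v i ^ 2)
      (by nlinarith [mul_le_mul_of_nonneg_left hxy hw.le]) (by positivity)
  rw [← hcut_eq] at h
  have hxy_eq : 2 * ((∑ i ∈ S, v i) * ∑ i ∈ Sᶜ, v i) = -(√(#S * #Sᶜ) * ∑ i, v i ^ 2) :=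
    le_antisymm (le_of_mul_le_mul_left (a := w) (by linarith) hw) hxy
  have hform : v ⬝ᵥ bipartiteMatrix S w *ᵥ v = v ⬝ᵥ g *ᵥ v :=
    le_antisymm hle (by nlinarith)
  have hkl : #S * #Sᶜ = n / 2 * ((n + 1) / 2) := by
    exact_mod_cast (Real.sqrt_inj (by positivity) (by positivity)).1 hcut_eq
  have hpos : 0 < #S * #Sᶜ := hkl ▸ Nat.mul_pos (by omega) (by omega)
  have hk := Nat.pos_of_mul_pos_right hpos
  have hl := Nat.pos_of_mul_pos_left hpos
  have hv' := apply_ne_zero_of_mul_add_mul_eq_zero (card_pos.1 hk) (card_pos.1 hl)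
    (Real.sqrt_ne_zero'.2 (mod_cast hk)) (Real.sqrt_ne_zero'.2 (mod_cast hl)) hv
    (sqrt_card_mul_add_eq_zero_of_two_mul_sum_mul_sum_compl_eq hxy_eq)
  have hgS := eq_bipartiteMatrix_nonneg_of_dotProduct_mulVec_eq hg hv' hform
  rcases Nat.eq_div_two_of_mul_eq (card_add_card_compl S) hkl with hk | hl
  · exact ⟨S, hk, hgS⟩
  · exact ⟨Sᶜ, hl, hgS.trans (bipartiteMatrix_compl S w).symm⟩

end

/-- Lemma 2(ii): every real eigenvalue of `g ∈ 𝒢ₙ` is at least `−w̄√(⌊n/2⌋⌈n/2⌉)`, with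
equality only for networks isomorphic to the complete balanced bipartite network
`w̄ K_{⌊n/2⌋,⌈n/2⌉}`. -/
theorem stmt11 (n : ℕ) (hn : 2 ≤ n) (w : ℝ) (hw : 0 < w)
    (g : Matrix (Fin n) (Fin n) ℝ) (hg : g ∈ Gset n w) :
    (∀ μ : ℝ, hasEigen g μ →
      -(w * Real.sqrt (((n / 2 : ℕ) : ℝ) * (((n + 1) / 2 : ℕ) : ℝ))) ≤ μ) ∧
    (hasEigen g (-(w * Real.sqrt (((n / 2 : ℕ) : ℝ) * (((n + 1) / 2 : ℕ) : ℝ)))) →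
      ∃ S : Finset (Fin n), S.card = n / 2 ∧
        ∀ i j : Fin n, i ≠ j → g i j = if (i ∈ S ↔ j ∈ S) then 0 else w) := by
  have hbnd := hg.2.2
  refine ⟨fun μ ⟨v, hv, hμ⟩ => ?_, fun ⟨v, hv, hμ⟩ => ?_⟩
  · have hle := neg_mul_sqrt_mul_sum_sq_le_dotProduct_mulVec hw.le hbnd v
    rw [dotProduct_mulVec_eq_mul_sum_sq hμ] at hle
    simpa using le_of_mul_le_mul_right hle (sum_sq_pos_of_ne_zero hv)
  · obtain ⟨S, hS, rfl⟩ := exists_card_eq_bipartiteMatrix_of_dotProduct_mulVec_eq (by simpa) hw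
      hbnd hv (by simpa using dotProduct_mulVec_eq_mul_sum_sq hμ)
    exact ⟨S, by simpa using hS, fun _ _ _ => rfl⟩
end

section
/- Fix an integer n ≥ 2, w̄ > 0 and φ ≠ 0, and suppose Assumption 1 holds: w̄ < 1/(φ(n−1)) if φ > 0; w̄ < −2/(φn) if φ < 0 and n is even; w̄ < −2/(φ√(n²−1)) if φ < 0 and n is odd. Then for every g ∈ 𝒢ₙ, every real eigenvalue of φg is strictly less than 1. -/
open Matrix

/-!
Write `φ g v = μ v` as `g v = λ v` with `λ = μ / φ`. For `φ > 0`, Gershgorin's theorem bounds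
`|λ|` by an off-diagonal row sum, which is at most `w̄ (n - 1)`. For `φ < 0`, split `v = p - q`
into its positive and negative parts, supported on disjoint sets of sizes `k + m ≤ n`. Then
`λ ‖v‖² = vᵀ g v ≥ -2 w̄ (∑ p) (∑ q)`, and Cauchy–Schwarz on each support together with AM-GM gives
`2 (∑ p) (∑ q) ≤ √(k m) ‖v‖²`, so `λ ≥ -w̄ √(k m)`. Finally `4 k m ≤ n²`, and `4 k m ≤ n² - 1`
when `n` is odd.
-/

open Finset

section

variable {ι : Type*} [Fintype ι]

theorem sq_sum_le_card_support_mul_sum_sq (f : ι → ℝ) :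
    (∑ i, f i) ^ 2 ≤ #{i | f i ≠ 0} * ∑ i, f i ^ 2 := by
  rw [← sum_filter_ne_zero]
  refine sq_sum_le_card_mul_sum_sq.trans (mul_le_mul_of_nonneg_left ?_ (Nat.cast_nonneg _))
  exact sum_le_sum_of_subset_of_nonneg (filter_subset _ _) fun i _ _ ↦ sq_nonneg _

theorem card_support_posPart_add_card_support_negPart_le (v : ι → ℝ) :
    #{i | (v i)⁺ ≠ 0} + #{i | (v i)⁻ ≠ 0} ≤ Fintype.card ι := by
  classical
  rw [← card_union_of_disjoint]
  · exact card_le_univ _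
  · refine disjoint_filter.mpr fun i _ hp hq ↦ hq ?_
    rw [Ne, posPart_eq_zero, not_le] at hp
    exact negPart_eq_zero.mpr hp.le

theorem neg_le_mul_mul_of_mem_Icc {a w x y : ℝ} (ha : 0 ≤ a) (haw : a ≤ w) :
    -(w * (x⁺ * y⁻ + x⁻ * y⁺)) ≤ a * x * y := by
  have hxy : a * x * y = a * (x⁺ * y⁺ + x⁻ * y⁻) - a * (x⁺ * y⁻ + x⁻ * y⁺) := by
    conv_lhs => rw [← posPart_sub_negPart x, ← posPart_sub_negPart y]
    ring
  nlinarith [mul_nonneg ha (mul_nonneg (posPart_nonneg x) (posPart_nonneg y)),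
    mul_nonneg ha (mul_nonneg (negPart_nonneg x) (negPart_nonneg y)),
    mul_nonneg (sub_nonneg.mpr haw) (mul_nonneg (posPart_nonneg x) (negPart_nonneg y)),
    mul_nonneg (sub_nonneg.mpr haw) (mul_nonneg (negPart_nonneg x) (posPart_nonneg y))]

theorem four_mul_mul_le_mul_add {A B k m x y c : ℝ} (hA : A ^ 2 ≤ k * x) (hB : B ^ 2 ≤ m * y)
    (hkm : 4 * (k * m) ≤ c ^ 2) (hx : 0 ≤ x) (hy : 0 ≤ y)
    (hc : 0 ≤ c) : 4 * (A * B) ≤ c * (x + y) := by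
  refine (le_abs_self _).trans (abs_le_of_sq_le_sq ?_ (by positivity))
  calc (4 * (A * B)) ^ 2 = 16 * (A ^ 2 * B ^ 2) := by ring
    _ ≤ 16 * ((k * x) * (m * y)) := by gcongr; exact (sq_nonneg A).trans hA
    _ = 4 * (4 * (k * m)) * (x * y) := by ring
    _ ≤ 4 * c ^ 2 * (x * y) := by gcongr
    _ ≤ (c * (x + y)) ^ 2 := by nlinarith [sq_nonneg (x - y), sq_nonneg c]

theorem sum_sum_mul_mul_eq_of_mulVec_eq_smul {g : Matrix ι ι ℝ} {v : ι → ℝ} {l : ℝ}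
    (hv : g *ᵥ v = l • v) : ∑ i, ∑ j, g i j * v i * v j = l * ∑ i, v i ^ 2 := by
  rw [mul_sum]
  refine sum_congr rfl fun i _ ↦ ?_
  have := congrFun hv i
  simp only [mulVec, dotProduct, Pi.smul_apply, smul_eq_mul] at this
  simp_rw [mul_comm (g i _) (v i), mul_assoc, ← mul_sum, this]
  ring

theorem neg_mul_div_two_le_of_mulVec_eq_smul {g : Matrix ι ι ℝ} {w c l : ℝ} {v : ι → ℝ}
    (hg : ∀ i j, 0 ≤ g i j ∧ g i j ≤ w) (hw : 0 ≤ w) (hc : 0 ≤ c)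
    (hkm : ∀ k m : ℕ, k + m ≤ Fintype.card ι → 4 * ((k : ℝ) * m) ≤ c ^ 2)
    (hv0 : v ≠ 0) (hv : g *ᵥ v = l • v) : -(w * c / 2) ≤ l := by
  set A := ∑ i, (v i)⁺
  set B := ∑ i, (v i)⁻
  set T := ∑ i, v i ^ 2
  have hT : 0 < T := by
    obtain ⟨i, hi⟩ := Function.ne_iff.mp hv0
    exact sum_pos' (fun i _ ↦ sq_nonneg _) ⟨i, mem_univ i, sq_pos_of_ne_zero hi⟩
  have hquad : -(2 * w * (A * B)) ≤ l * T := by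
    rw [← sum_sum_mul_mul_eq_of_mulVec_eq_smul hv]
    calc -(2 * w * (A * B))
        = ∑ i, ∑ j, -(w * ((v i)⁺ * (v j)⁻ + (v i)⁻ * (v j)⁺)) := by
          simp only [A, B, sum_neg_distrib, mul_add, sum_add_distrib, ← mul_sum, ← sum_mul]
          ring
      _ ≤ ∑ i, ∑ j, g i j * v i * v j := by
          gcongr with i _ j _
          exact neg_le_mul_mul_of_mem_Icc (hg i j).1 (hg i j).2
  have hparts : ∑ i, (v i)⁺ ^ 2 + ∑ i, (v i)⁻ ^ 2 ≤ T := by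
    rw [← sum_add_distrib]
    refine sum_le_sum fun i _ ↦ ?_
    calc (v i)⁺ ^ 2 + (v i)⁻ ^ 2 ≤ ((v i)⁺ + (v i)⁻) ^ 2 := by
          nlinarith [mul_nonneg (posPart_nonneg (v i)) (negPart_nonneg (v i))]
      _ = v i ^ 2 := by rw [posPart_add_negPart, sq_abs]
  have hAB : 4 * (A * B) ≤ c * T := by
    refine (four_mul_mul_le_mul_add (sq_sum_le_card_support_mul_sum_sq _)
      (sq_sum_le_card_support_mul_sum_sq _) (hkm _ _ ?_) (sum_nonneg fun i _ ↦ sq_nonneg _)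
      (sum_nonneg fun i _ ↦ sq_nonneg _) hc).trans (by gcongr)
    exact card_support_posPart_add_card_support_negPart_le v
  nlinarith

theorem abs_le_mul_card_sub_one_of_mulVec_eq_smul [DecidableEq ι] {g : Matrix ι ι ℝ}
    {w l : ℝ} {v : ι → ℝ} (hdiag : ∀ i, g i i = 0) (hg : ∀ i j, |g i j| ≤ w) (hv0 : v ≠ 0)
    (hv : g *ᵥ v = l • v) : |l| ≤ w * (Fintype.card ι - 1) := by
  have hl : Module.End.HasEigenvalue (toLin' g) l :=
    Module.End.hasEigenvalue_of_hasEigenvector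
      ⟨Module.End.mem_eigenspace_iff.mpr (by rwa [toLin'_apply]), hv0⟩
  obtain ⟨k, hk⟩ := eigenvalue_mem_ball hl
  rw [Metric.mem_closedBall, hdiag, dist_zero_right, Real.norm_eq_abs] at hk
  calc |l| ≤ ∑ j ∈ univ.erase k, ‖g k j‖ := hk
    _ ≤ ∑ j ∈ univ.erase k, w := sum_le_sum fun j _ ↦ hg k j
    _ = w * (Fintype.card ι - 1) := by
      have : Nonempty ι := ⟨k⟩
      rw [sum_const, card_erase_of_mem (mem_univ k), card_univ, nsmul_eq_mul, mul_comm,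
        Nat.cast_pred Fintype.card_pos]

end

theorem Nat.four_mul_mul_le_sq_of_add_le {k m n : ℕ} (h : k + m ≤ n) : 4 * (k * m) ≤ n ^ 2 := by
  nlinarith [sq_nonneg ((k : ℤ) - m)]

theorem Nat.four_mul_mul_add_one_le_sq_of_add_le {k m n : ℕ} (h : k + m ≤ n) (hn : Odd n) :
    4 * (k * m) + 1 ≤ n ^ 2 := by
  obtain ⟨t, rfl⟩ := hn
  zify at h ⊢
  -- `t (t + 1) - k (2 t + 1 - k) = (t - k) (t - k + 1)`, a product of consecutive integers
  have hconsec : 0 ≤ ((t : ℤ) - k) * (t - k + 1) := by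
    rcases le_or_gt 0 ((t : ℤ) - k) with h' | h' <;> nlinarith
  nlinarith

theorem hasEigen.of_smul {n : ℕ} {M : Matrix (Fin n) (Fin n) ℝ} {φ μ : ℝ} (hφ : φ ≠ 0)
    (h : hasEigen (φ • M) μ) : hasEigen M (μ / φ) := by
  obtain ⟨v, hv0, hv⟩ := h
  refine ⟨v, hv0, ?_⟩
  rw [smul_mulVec] at hv
  rw [div_eq_inv_mul, mul_smul, ← hv, smul_smul, inv_mul_cancel₀ hφ, one_smul]

/-- Remark 1: under Assumption 1, every real eigenvalue of `φg` is strictly less than `1`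
for every `g ∈ 𝒢ₙ`. -/
theorem stmt12 (n : ℕ) (hn : 2 ≤ n) (w φ : ℝ) (hw : 0 < w) (hφ : φ ≠ 0)
    (hpos : 0 < φ → w < 1 / (φ * ((n : ℝ) - 1)))
    (hnegEven : φ < 0 → Even n → w < -2 / (φ * (n : ℝ)))
    (hnegOdd : φ < 0 → Odd n → w < -2 / (φ * Real.sqrt ((n : ℝ) ^ 2 - 1))) :
    ∀ g ∈ Gset n w, ∀ μ : ℝ, hasEigen (φ • g) μ → μ < 1 := by
  rintro g ⟨-, hdiag, hg⟩ μ heig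
  obtain ⟨v, hv0, hv⟩ := heig.of_smul hφ
  have hμ : μ = φ * (μ / φ) := (mul_div_cancel₀ μ hφ).symm
  have hn' : (2 : ℝ) ≤ n := by exact_mod_cast hn
  rcases hφ.lt_or_gt with hφ | hφ
  · obtain ⟨c, hc, hwc, hkm⟩ : ∃ c : ℝ, 0 < c ∧ w < -2 / (φ * c) ∧
        ∀ k m : ℕ, k + m ≤ n → 4 * ((k : ℝ) * m) ≤ c ^ 2 := by
      rcases Nat.even_or_odd n with he | ho
      · refine ⟨n, by positivity, hnegEven hφ he, fun k m h ↦ ?_⟩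
        exact_mod_cast Nat.four_mul_mul_le_sq_of_add_le h
      · refine ⟨√((n : ℝ) ^ 2 - 1), Real.sqrt_pos.mpr (by nlinarith), hnegOdd hφ ho,
          fun k m h ↦ ?_⟩
        rw [Real.sq_sqrt (by nlinarith), le_sub_iff_add_le]
        exact_mod_cast Nat.four_mul_mul_add_one_le_sq_of_add_le h ho
    have hl := neg_mul_div_two_le_of_mulVec_eq_smul hg hw.le hc.le (by simpa using hkm) hv0 hv
    rw [lt_div_iff_of_neg (mul_neg_of_neg_of_pos hφ hc)] at hwc
    nlinarith [mul_le_mul_of_nonpos_left hl hφ.le]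
  · have hl := abs_le_mul_card_sub_one_of_mulVec_eq_smul hdiag
      (fun i j ↦ abs_le.mpr ⟨by linarith [(hg i j).1], (hg i j).2⟩) hv0 hv
    rw [Fintype.card_fin] at hl
    have hwφ := hpos hφ
    rw [lt_div_iff₀ (by nlinarith)] at hwφ
    nlinarith [mul_le_mul_of_nonneg_left ((le_abs_self _).trans hl) hφ.le]
end

section
/- Fix an integer n ≥ 2 and w̄ > 0, let g ∈ 𝒢ₙ, and let u be a unit eigenvector of g corresponding to its smallest eigenvalue λ_n(g). Let R = {i : u_i ≥ 0} and define g′ ∈ 𝒢ₙ by: for i ≠ j, g′_{ij} = w̄ if exactly one of i, j lies in R, and g′_{ij} = 0 otherwise (and zero diagonal). Then the smallest eigenvalue of g′ is at most the smallest eigenvalue of g, i.e., λ_n(g′) ≤ λ_n(g). -/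
/-!
Since `λₙ(g′)` lies below every eigenvalue of the symmetric matrix `g′`, the matrix
`g′ - λₙ(g′) • 1` is positive semidefinite, so `λₙ(g′) ≤ uᵀ g′ u`. The quadratic forms of `g′`
and `g` compare term by term: where `uᵢ` and `uⱼ` have the same sign, `g′ᵢⱼ uᵢ uⱼ = 0 ≤ gᵢⱼ uᵢ uⱼ`,
and where the signs differ, `uᵢ uⱼ ≤ 0` and `g′ᵢⱼ = w̄ ≥ gᵢⱼ`. Hence
`λₙ(g′) ≤ uᵀ g′ u ≤ uᵀ g u = λₙ(g)`.
-/

open Matrix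

section Eigenvalues

variable {n : ℕ} {M : Matrix (Fin n) (Fin n) ℝ}

theorem Matrix.IsHermitian.hasEigen_eigenvalues_s13 (hM : M.IsHermitian) (i : Fin n) :
    hasEigen M (hM.eigenvalues i) :=
  ⟨_, fun h => hM.eigenvectorBasis.toBasis.ne_zero i (WithLp.ofLp_injective 2 h),
    hM.mulVec_eigenvectorBasis i⟩

theorem hasEigen.of_sub_smul_one {c μ : ℝ} (h : hasEigen (M - c • 1) μ) :
    hasEigen M (μ + c) := by
  obtain ⟨v, hv, hMv⟩ := h
  refine ⟨v, hv, ?_⟩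
  rw [sub_mulVec, smul_mulVec, one_mulVec, sub_eq_iff_eq_add] at hMv
  rw [hMv, add_smul]

theorem Matrix.IsHermitian.posSemidef_sub_smul_one (hM : M.IsHermitian) {c : ℝ}
    (hc : ∀ μ, hasEigen M μ → c ≤ μ) : (M - c • 1).PosSemidef := by
  have hN : (M - c • 1).IsHermitian := hM.sub (isHermitian_one.smul (IsSelfAdjoint.all c))
  refine hN.posSemidef_iff_eigenvalues_nonneg.mpr fun i => ?_
  simpa using hc _ (hN.hasEigen_eigenvalues_s13 i).of_sub_smul_one

theorem Matrix.IsHermitian.mul_dotProduct_self_le (hM : M.IsHermitian) {c : ℝ}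
    (hc : ∀ μ, hasEigen M μ → c ≤ μ) (u : Fin n → ℝ) : c * (u ⬝ᵥ u) ≤ u ⬝ᵥ M *ᵥ u := by
  have := (hM.posSemidef_sub_smul_one hc).dotProduct_mulVec_nonneg u
  simp only [star_trivial, sub_mulVec, smul_mulVec, one_mulVec, dotProduct_sub,
    dotProduct_smul, smul_eq_mul] at this
  linarith

end Eigenvalues

theorem dotProduct_mulVec_le_of_forall_mul_le {ι : Type*} [Fintype ι] {M N : Matrix ι ι ℝ}
    {u : ι → ℝ} (h : ∀ i j, M i j * (u i * u j) ≤ N i j * (u i * u j)) :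
    u ⬝ᵥ M *ᵥ u ≤ u ⬝ᵥ N *ᵥ u := by
  simp only [dotProduct, mulVec, Finset.mul_sum]
  exact Finset.sum_le_sum fun i _ => Finset.sum_le_sum fun j _ => by linarith [h i j]

noncomputable def signCut {n : ℕ} (w : ℝ) (u : Fin n → ℝ) : Matrix (Fin n) (Fin n) ℝ :=
  Matrix.of fun i j => if i = j then 0 else if (0 ≤ u i ↔ 0 ≤ u j) then 0 else w

theorem signCut_isHermitian {n : ℕ} (w : ℝ) (u : Fin n → ℝ) : (signCut w u).IsHermitian := by
  ext i j
  simp only [signCut, conjTranspose_apply, of_apply, star_trivial, eq_comm (a := j),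
    Iff.comm (a := 0 ≤ u j)]

theorem signCut_mul_le {n : ℕ} {w : ℝ} {g : Matrix (Fin n) (Fin n) ℝ} (hg : g ∈ Gset n w)
    (u : Fin n → ℝ) (i j : Fin n) : signCut w u i j * (u i * u j) ≤ g i j * (u i * u j) := by
  obtain ⟨-, hdiag, hbound⟩ := hg
  obtain ⟨hg0, hgw⟩ := hbound i j
  by_cases hij : i = j
  · simp [signCut, hij, hdiag]
  by_cases hi : 0 ≤ u i <;> by_cases hj : 0 ≤ u j <;>
    simp only [signCut, of_apply, hij, hi, hj, if_false, if_true, iff_self, iff_false, false_iff]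
  · exact mul_le_mul_of_nonneg_right hg0 (mul_nonneg hi hj)
  · exact mul_le_mul_of_nonpos_right hgw (mul_nonpos_of_nonneg_of_nonpos hi (not_le.mp hj).le)
  · exact mul_le_mul_of_nonpos_right hgw (mul_nonpos_of_nonpos_of_nonneg (not_le.mp hi).le hj)
  · exact mul_le_mul_of_nonneg_right hg0
      (mul_nonneg_of_nonpos_of_nonpos (not_le.mp hi).le (not_le.mp hj).le)

theorem stmt13_general (n : ℕ) (w : ℝ)
    (g : Matrix (Fin n) (Fin n) ℝ) (hg : g ∈ Gset n w)
    (lam : ℝ) (u : Fin n → ℝ) (hu_unit : (∑ i, u i ^ 2) = 1)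
    (heig : g.mulVec u = lam • u) :
    let g' : Matrix (Fin n) (Fin n) ℝ :=
      Matrix.of fun i j => if i = j then 0 else if (0 ≤ u i ↔ 0 ≤ u j) then 0 else w
    ∀ lam' : ℝ, hasEigen g' lam' → (∀ μ : ℝ, hasEigen g' μ → lam' ≤ μ) →
      lam' ≤ lam := by
  intro g' lam' _ hmin'
  have hunit : u ⬝ᵥ u = 1 := by simpa [dotProduct, sq] using hu_unit
  calc lam' = lam' * (u ⬝ᵥ u) := by rw [hunit, mul_one]
    _ ≤ u ⬝ᵥ g' *ᵥ u := (signCut_isHermitian w u).mul_dotProduct_self_le hmin' u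
    _ ≤ u ⬝ᵥ g *ᵥ u := dotProduct_mulVec_le_of_forall_mul_le (signCut_mul_le hg u)
    _ = lam := by rw [heig, dotProduct_smul, smul_eq_mul, hunit, mul_one]

/-- Rewiring according to the signs of the bottom eigenvector weakly decreases the smallest
eigenvalue: if `u` is a unit eigenvector of `g` for the smallest eigenvalue `λₙ(g)` and `g′`
has weight `w̄` exactly between `R = {i : uᵢ ≥ 0}` and its complement (and `0` otherwise),
then `λₙ(g′) ≤ λₙ(g)`. -/
theorem stmt13 (n : ℕ) (hn : 2 ≤ n) (w : ℝ) (hw : 0 < w)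
    (g : Matrix (Fin n) (Fin n) ℝ) (hg : g ∈ Gset n w)
    (lam : ℝ) (u : Fin n → ℝ) (hu : u ≠ 0) (hu_unit : (∑ i, u i ^ 2) = 1)
    (heig : g.mulVec u = lam • u)
    (hmin : ∀ μ : ℝ, hasEigen g μ → lam ≤ μ) :
    let g' : Matrix (Fin n) (Fin n) ℝ :=
      Matrix.of fun i j => if i = j then 0 else if (0 ≤ u i ↔ 0 ≤ u j) then 0 else w
    ∀ lam' : ℝ, hasEigen g' lam' → (∀ μ : ℝ, hasEigen g' μ → lam' ≤ μ) →
      lam' ≤ lam :=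
  stmt13_general n w g hg lam u hu_unit heig
end

section
/- Let g be a symmetric n×n real matrix, φ ∈ ℝ with every eigenvalue of φg less than 1, and â ∈ ℝⁿ. Define the single-intervention value function V*_single(g, â, C) = sup { aᵀ (I − φg)⁻² a : a ∈ ℝⁿ, ‖a − â‖² ≤ C }. Then lim_{C→∞} V*_single(g, â, C)/C = 1/(1 − λ₁(φg))², where λ₁(φg) is the largest eigenvalue of φg. -/
open Matrix

/-!
Write `B = 1 - φ • g` and `L = (1 - λ₁)⁻²`. Substituting `a = B w` turns `aᵀB⁻²a` into `‖w‖²`,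
and the Rayleigh bound `wᵀ(φ • g)w ≤ λ₁‖w‖²` gives `(1 - λ₁)‖w‖² ≤ wᵀBw`, whence
`(1 - λ₁)²‖w‖² ≤ ‖Bw‖²`; so `aᵀB⁻²a ≤ L‖a‖²`, with equality on a `λ₁`-eigenvector `u`.
On the ball `‖a - â‖² ≤ C` the value is therefore at most `L(√C + ‖â‖)²`, and at least
`âᵀB⁻²â + LC`, reached at one of `â ± √C u/‖u‖`. Both bounds are `LC + O(√C)`.
-/

open Filter Topology

section Spectral

variable {n : ℕ} {A : Matrix (Fin n) (Fin n) ℝ}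

lemma hasEigen_eigenvalues (hA : A.IsHermitian) (i : Fin n) : hasEigen A (hA.eigenvalues i) :=
  ⟨_, (WithLp.ofLp_eq_zero 2).ne.2 <| hA.eigenvectorBasis.orthonormal.ne_zero i,
    hA.mulVec_eigenvectorBasis i⟩

/-- Rayleigh bound: `t • 1 - A` has eigenvalues `t - μ ≥ 0`, so it is positive semidefinite. -/
lemma dotProduct_mulVec_le_of_hasEigen_le (hA : A.IsHermitian) {t : ℝ}
    (ht : ∀ μ, hasEigen A μ → μ ≤ t) (a : Fin n → ℝ) : a ⬝ᵥ A *ᵥ a ≤ t * (a ⬝ᵥ a) := by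
  have hN : (t • 1 - A).IsHermitian := (isHermitian_one.smul (IsSelfAdjoint.all t)).sub hA
  have hpsd : (t • 1 - A).PosSemidef := by
    refine hN.posSemidef_iff_eigenvalues_nonneg.2 fun i => ?_
    obtain ⟨v, hv0, hv⟩ := hasEigen_eigenvalues hN i
    have hAv : A *ᵥ v = (t - hN.eigenvalues i) • v := by
      rw [sub_mulVec, smul_mulVec, one_mulVec, sub_eq_iff_eq_add] at hv
      rw [sub_smul, hv, add_sub_cancel_left]
    simpa using ht _ ⟨v, hv0, hAv⟩
  have := hpsd.dotProduct_mulVec_nonneg a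
  simp only [star_trivial, sub_mulVec, smul_mulVec, one_mulVec, dotProduct_sub,
    dotProduct_smul, smul_eq_mul] at this
  linarith

lemma isUnit_det_one_sub (h : ¬ hasEigen A 1) : IsUnit (1 - A).det := by
  rw [isUnit_iff_ne_zero]
  intro hdet
  obtain ⟨v, hv0, hv⟩ := exists_mulVec_eq_zero_iff.2 hdet
  rw [sub_mulVec, one_mulVec, sub_eq_zero] at hv
  exact h ⟨v, hv0, by rw [one_smul, ← hv]⟩

/-- Expand `0 ≤ ‖B w - s w‖²`. -/
lemma sq_mul_dotProduct_self_le {B : Matrix (Fin n) (Fin n) ℝ} {s : ℝ} (hs : 0 ≤ s)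
    {w : Fin n → ℝ} (h : s * (w ⬝ᵥ w) ≤ w ⬝ᵥ B *ᵥ w) :
    s ^ 2 * (w ⬝ᵥ w) ≤ B *ᵥ w ⬝ᵥ B *ᵥ w := by
  have hsq : 0 ≤ (B *ᵥ w - s • w) ⬝ᵥ (B *ᵥ w - s • w) := dotProduct_self_star_nonneg _
  simp only [sub_dotProduct, dotProduct_sub, smul_dotProduct, dotProduct_smul, smul_eq_mul,
    dotProduct_comm (B *ᵥ w) w] at hsq
  nlinarith

lemma dotProduct_one_sub_inv_sq_mulVec_le (hA : A.IsHermitian) {t : ℝ}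
    (ht : ∀ μ, hasEigen A μ → μ ≤ t) (ht1 : t < 1) (a : Fin n → ℝ) :
    a ⬝ᵥ ((1 - A)⁻¹ ^ 2) *ᵥ a ≤ ((1 - t) ^ 2)⁻¹ * (a ⬝ᵥ a) := by
  have hdet := isUnit_det_one_sub fun h => (ht 1 h).not_gt ht1
  have hsymm : ((1 - A)⁻¹)ᵀ = (1 - A)⁻¹ := by
    rw [transpose_nonsing_inv, transpose_sub, transpose_one, isHermitian_iff_isSymm.1 hA]
  set w := (1 - A)⁻¹ *ᵥ a
  have haw : (1 - A) *ᵥ w = a := by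
    rw [mulVec_mulVec, mul_nonsing_inv _ hdet, one_mulVec]
  have hquad : a ⬝ᵥ ((1 - A)⁻¹ ^ 2) *ᵥ a = w ⬝ᵥ w := by
    rw [sq, ← mulVec_mulVec, dotProduct_mulVec, ← mulVec_transpose, hsymm, dotProduct_comm]
  have hw : (1 - t) * (w ⬝ᵥ w) ≤ w ⬝ᵥ (1 - A) *ᵥ w := by
    have := dotProduct_mulVec_le_of_hasEigen_le hA ht w
    rw [sub_mulVec, one_mulVec, dotProduct_sub]
    linarith
  have key := sq_mul_dotProduct_self_le (sub_nonneg.2 ht1.le) hw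
  rw [haw] at key
  rw [hquad, inv_mul_eq_div, le_div_iff₀' (by nlinarith)]
  exact key

lemma one_sub_inv_sq_mulVec (hdet : IsUnit (1 - A).det) {μ : ℝ} {v : Fin n → ℝ}
    (hv : A *ᵥ v = μ • v) (hμ : μ ≠ 1) :
    ((1 - A)⁻¹ ^ 2) *ᵥ v = ((1 - μ) ^ 2)⁻¹ • v := by
  have hinv : (1 - A)⁻¹ *ᵥ v = (1 - μ)⁻¹ • v := by
    have h : (1 - A) *ᵥ v = (1 - μ) • v := by rw [sub_mulVec, one_mulVec, hv, sub_smul, one_smul]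
    rw [eq_inv_smul_iff₀ (sub_ne_zero.2 hμ.symm), ← mulVec_smul, ← h, mulVec_mulVec,
      nonsing_inv_mul _ hdet, one_mulVec]
  rw [sq, ← mulVec_mulVec, hinv, mulVec_smul, hinv, smul_smul, ← mul_inv, sq]

end Spectral

section ValueFunction

variable {ι : Type*} [Fintype ι]

def singleValueSet (M : Matrix ι ι ℝ) (ahat : ι → ℝ) (C : ℝ) : Set ℝ :=
  {v : ℝ | ∃ a : ι → ℝ, (∑ i, (a i - ahat i) ^ 2) ≤ C ∧ v = a ⬝ᵥ M *ᵥ a}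

noncomputable def singleValue (M : Matrix ι ι ℝ) (ahat : ι → ℝ) (C : ℝ) : ℝ :=
  sSup (singleValueSet M ahat C)

lemma dotProduct_mulVec_parallelogram (M : Matrix ι ι ℝ) (x y : ι → ℝ) :
    (x + y) ⬝ᵥ M *ᵥ (x + y) + (x - y) ⬝ᵥ M *ᵥ (x - y)
      = 2 * (x ⬝ᵥ M *ᵥ x) + 2 * (y ⬝ᵥ M *ᵥ y) := by
  simp only [mulVec_add, mulVec_sub, add_dotProduct, dotProduct_add, sub_dotProduct,
    dotProduct_sub]
  ring

lemma dotProduct_self_le_of_sum_sub_sq_le {a ahat : ι → ℝ} {C : ℝ}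
    (h : ∑ i, (a i - ahat i) ^ 2 ≤ C) :
    a ⬝ᵥ a ≤ (√C + ‖WithLp.toLp 2 ahat‖) ^ 2 := by
  have hdist : ‖WithLp.toLp 2 a - WithLp.toLp 2 ahat‖ ≤ √C := by
    rw [← WithLp.toLp_sub, EuclideanSpace.norm_eq]
    gcongr
    simpa using h
  calc a ⬝ᵥ a = ‖WithLp.toLp 2 a‖ ^ 2 := by
        rw [EuclideanSpace.real_norm_sq_eq]; simp [dotProduct, sq]
    _ ≤ (‖WithLp.toLp 2 a - WithLp.toLp 2 ahat‖ + ‖WithLp.toLp 2 ahat‖) ^ 2 := by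
        gcongr
        exact norm_le_norm_sub_add _ _
    _ ≤ (√C + ‖WithLp.toLp 2 ahat‖) ^ 2 := by gcongr

variable {M : Matrix ι ι ℝ} {ahat : ι → ℝ} {L C : ℝ}

lemma mem_upperBounds_singleValueSet (hL : 0 ≤ L)
    (hle : ∀ a, a ⬝ᵥ M *ᵥ a ≤ L * (a ⬝ᵥ a)) :
    L * (√C + ‖WithLp.toLp 2 ahat‖) ^ 2 ∈ upperBounds (singleValueSet M ahat C) := by
  rintro _ ⟨a, ha, rfl⟩
  exact (hle a).trans (mul_le_mul_of_nonneg_left (dotProduct_self_le_of_sum_sub_sq_le ha) hL)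

lemma singleValue_le (hL : 0 ≤ L) (hle : ∀ a, a ⬝ᵥ M *ᵥ a ≤ L * (a ⬝ᵥ a)) (hC : 0 ≤ C) :
    singleValue M ahat C ≤ L * (√C + ‖WithLp.toLp 2 ahat‖) ^ 2 :=
  csSup_le ⟨_, ahat, by simpa using hC, rfl⟩ (mem_upperBounds_singleValueSet hL hle)

/-- Moving from `ahat` by `± y` with `M y = L y` and `‖y‖² = C`, the parallelogram law
shows that one of the two directions gains at least `L * C`. -/
lemma add_mul_le_singleValue (hL : 0 ≤ L) (hle : ∀ a, a ⬝ᵥ M *ᵥ a ≤ L * (a ⬝ᵥ a))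
    {u : ι → ℝ} (hu : M *ᵥ u = L • u) (hu0 : u ≠ 0) (hC : 0 ≤ C) :
    ahat ⬝ᵥ M *ᵥ ahat + L * C ≤ singleValue M ahat C := by
  have huu : 0 < u ⬝ᵥ u := by simpa using dotProduct_self_star_pos_iff.2 hu0
  set y := √(C / (u ⬝ᵥ u)) • u
  have hyy : y ⬝ᵥ y = C := by
    rw [smul_dotProduct, dotProduct_smul, smul_eq_mul, smul_eq_mul, ← mul_assoc,
      Real.mul_self_sqrt (by positivity), div_mul_cancel₀ _ huu.ne']
  have hMy : y ⬝ᵥ M *ᵥ y = L * C := by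
    rw [mulVec_smul, hu, smul_comm, dotProduct_smul, smul_eq_mul, hyy]
  have hle_sup : ∀ z, (∑ i, (z i - ahat i) ^ 2) ≤ C → z ⬝ᵥ M *ᵥ z ≤ singleValue M ahat C :=
    fun z hz => le_csSup ⟨_, mem_upperBounds_singleValueSet hL hle⟩ ⟨z, hz, rfl⟩
  have h₁ := hle_sup (ahat + y) (by simpa [dotProduct, sq] using hyy.le)
  have h₂ := hle_sup (ahat - y) (by simpa [dotProduct, sq] using hyy.le)
  linarith [dotProduct_mulVec_parallelogram M ahat y]

lemma tendsto_singleValue_div_atTop (hL : 0 ≤ L) (hle : ∀ a, a ⬝ᵥ M *ᵥ a ≤ L * (a ⬝ᵥ a))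
    {u : ι → ℝ} (hu : M *ᵥ u = L • u) (hu0 : u ≠ 0) :
    Tendsto (fun C => singleValue M ahat C / C) atTop (𝓝 L) := by
  set q := ahat ⬝ᵥ M *ᵥ ahat
  set R := ‖WithLp.toLp 2 ahat‖
  have hlower : Tendsto (fun C : ℝ => L + q / C) atTop (𝓝 L) := by
    have : Tendsto (fun C : ℝ => q / C) atTop (𝓝 0) := tendsto_const_nhds.div_atTop tendsto_id
    simpa using this.const_add L
  have hupper : Tendsto (fun C : ℝ => L * (1 + R / √C) ^ 2) atTop (𝓝 L) := by
    have : Tendsto (fun C : ℝ => R / √C) atTop (𝓝 0) :=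
      tendsto_const_nhds.div_atTop Real.tendsto_sqrt_atTop
    simpa using ((this.const_add 1).pow 2).const_mul L
  refine tendsto_of_tendsto_of_tendsto_of_le_of_le' hlower hupper ?_ ?_
  · filter_upwards [eventually_gt_atTop 0] with C hC
    rw [le_div_iff₀ hC, add_mul, div_mul_cancel₀ _ hC.ne']
    linarith [add_mul_le_singleValue (ahat := ahat) hL hle hu hu0 hC.le]
  · filter_upwards [eventually_gt_atTop 0] with C hC
    rw [div_le_iff₀ hC]
    refine (singleValue_le hL hle hC.le).trans_eq ?_
    field_simp
    rw [Real.sq_sqrt hC.le]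
    ring

end ValueFunction

/-- The single-intervention value function
`V*_single(g, â, C) = sup { aᵀ(I − φg)⁻²a : ‖a − â‖² ≤ C }` satisfies
`lim_{C→∞} V*_single(g, â, C)/C = 1/(1 − λ₁(φg))²`. -/
theorem stmt15 (n : ℕ) (g : Matrix (Fin n) (Fin n) ℝ) (hg : g.IsSymm) (φ : ℝ)
    (heig : ∀ μ : ℝ, hasEigen (φ • g) μ → μ < 1)
    (ahat : Fin n → ℝ)
    (lam1 : ℝ) (hlam : hasEigen (φ • g) lam1)
    (hmax : ∀ μ : ℝ, hasEigen (φ • g) μ → μ ≤ lam1) :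
    Filter.Tendsto
      (fun C : ℝ =>
        (sSup {v : ℝ | ∃ a : Fin n → ℝ, (∑ i, (a i - ahat i) ^ 2) ≤ C ∧
          v = a ⬝ᵥ (((1 - φ • g)⁻¹ ^ 2).mulVec a)}) / C)
      Filter.atTop (nhds (1 / (1 - lam1) ^ 2)) := by
  have hA : (φ • g).IsHermitian := isHermitian_iff_isSymm.2 (hg.smul φ)
  have hlam1 : lam1 < 1 := heig lam1 hlam
  have hdet : IsUnit (1 - φ • g).det := isUnit_det_one_sub fun h => (heig 1 h).false
  obtain ⟨v, hv0, hv⟩ := hlam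
  rw [one_div]
  exact tendsto_singleValue_div_atTop (by positivity)
    (dotProduct_one_sub_inv_sq_mulVec_le hA hmax hlam1) (one_sub_inv_sq_mulVec hdet hv hlam1.ne) hv0
end

section
/- Let n ≥ 5 be odd and w̄ > 0, and let g ∈ 𝒢ₙ. Suppose λ is a real eigenvalue of g admitting a nonzero eigenvector v with all entries of equal absolute value (|v_i| = |v_j| for all i, j). Then λ ≥ −w̄(n−1)/2. -/
open Matrix

lemma stmt17_aux (n : ℕ) (w : ℝ) (hw : 0 ≤ w)
    (g : Matrix (Fin n) (Fin n) ℝ)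
    (hgb : ∀ i j, 0 ≤ g i j ∧ g i j ≤ w)
    (lam c : ℝ) (hc : 0 < c) (v : Fin n → ℝ)
    (hvals : ∀ i, v i = c ∨ v i = -c)
    (heig : g.mulVec v = lam • v)
    (i0 : Fin n) (hi0 : v i0 = c)
    (m : ℕ) (hm : ((Finset.univ.filter (fun j => v j = -c)).card : ℝ) ≤ m) :
    -(w * m) ≤ lam := by
  have h1 : lam * c = ∑ j, g i0 j * v j := by
    have h := congrFun heig i0
    simp only [Matrix.mulVec, dotProduct, Pi.smul_apply, smul_eq_mul, hi0] at h
    linarith [h]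
  have h2 : ∀ j : Fin n, (if v j = -c then -(w * c) else 0) ≤ g i0 j * v j := by
    intro j
    rcases hvals j with h | h
    · have : v j ≠ -c := by rw [h]; intro hh; nlinarith
      simp only [this, if_false]
      exact mul_nonneg (hgb i0 j).1 (by rw [h]; exact hc.le)
    · simp only [h, if_true]
      have := (hgb i0 j).2
      nlinarith
  have h3 : (∑ j, (if v j = -c then -(w * c) else 0)) ≤ ∑ j, g i0 j * v j :=
    Finset.sum_le_sum (fun j _ => h2 j)
  have h4 : (∑ j, (if v j = -c then -(w * c) else 0))
      = ((Finset.univ.filter (fun j => v j = -c)).card : ℝ) * (-(w * c)) := by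
    rw [Finset.sum_ite]
    simp [Finset.sum_const, mul_comm]
  have h5 : -(w * m) * c ≤ lam * c := by
    rw [h1]
    have hwc : 0 ≤ w * c := mul_nonneg hw hc.le
    calc -(w * m) * c = (m : ℝ) * (-(w * c)) := by ring
      _ ≤ ((Finset.univ.filter (fun j => v j = -c)).card : ℝ) * (-(w * c)) := by
          apply mul_le_mul_of_nonpos_right hm; linarith
      _ ≤ ∑ j, g i0 j * v j := by rw [← h4]; exact h3
  exact le_of_mul_le_mul_right h5 hc

/-- Lemma 3: for odd `n ≥ 5` and `g ∈ 𝒢ₙ`, any real eigenvalue of `g` admitting an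
eigenvector whose entries all have the same absolute value is at least `−w̄(n−1)/2`. -/
theorem stmt17 (n : ℕ) (hn : 5 ≤ n) (hodd : Odd n) (w : ℝ) (hw : 0 < w)
    (g : Matrix (Fin n) (Fin n) ℝ) (hg : g ∈ Gset n w)
    (lam : ℝ) (v : Fin n → ℝ) (hv : v ≠ 0)
    (heig : g.mulVec v = lam • v)
    (habs : ∀ i j : Fin n, |v i| = |v j|) :
    -(w * ((n : ℝ) - 1) / 2) ≤ lam := by
  obtain ⟨_, _, hgb⟩ := hg
  -- the common absolute value
  obtain ⟨k, hk⟩ : ∃ k, v k ≠ 0 := by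
    by_contra h
    push_neg at h
    exact hv (funext h)
  set c : ℝ := |v k| with hcdef
  have hc : 0 < c := abs_pos.mpr hk
  have hvals : ∀ i, v i = c ∨ v i = -c := by
    intro i
    exact (abs_eq hc.le).mp (habs i k)
  set S := Finset.univ.filter (fun j => v j = c) with hS
  set T := Finset.univ.filter (fun j => v j = -c) with hT
  have hST : S.card + T.card = n := by
    classical
    have hdisj : Disjoint S T := by
      rw [Finset.disjoint_filter]
      intro j _ h1 h2
      rw [h1] at h2; nlinarith
    have hunion : S ∪ T = Finset.univ := by
      ext j
      simp only [Finset.mem_union, hS, hT, Finset.mem_filter, Finset.mem_univ, true_and,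
        iff_true]
      exact hvals j
    rw [← Finset.card_union_of_disjoint hdisj, hunion, Finset.card_univ, Fintype.card_fin]
  have hbound : ∀ m : ℕ, 2 * m + 1 ≤ n → ((m : ℝ)) ≤ ((n : ℝ) - 1) / 2 := by
    intro m hmn
    have : (2 * m + 1 : ℝ) ≤ n := by exact_mod_cast hmn
    linarith
  have key : ∀ m : ℕ, 2 * m + 1 ≤ n → -(w * m) ≤ lam → -(w * ((n : ℝ) - 1) / 2) ≤ lam := by
    intro m hmn hlam
    have h1 : (m : ℝ) ≤ ((n : ℝ) - 1) / 2 := hbound m hmn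
    have : -(w * ((n : ℝ) - 1) / 2) ≤ -(w * m) := by nlinarith
    linarith
  rcases lt_trichotomy S.card T.card with h | h | h
  · -- apply aux to -v ; the "negative" set of -v is S
    have heig' : g.mulVec (-v) = lam • (-v) := by
      rw [Matrix.mulVec_neg, heig]; ext i; simp
    have hvals' : ∀ i, (-v) i = c ∨ (-v) i = -c := by
      intro i
      rcases hvals i with hh | hh
      · exact Or.inr (by simp [hh])
      · exact Or.inl (by simp [hh])
    have hTne : T.Nonempty := by
      rw [← Finset.card_pos]; omega
    obtain ⟨i0, hi0mem⟩ := hTne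
    have hi0 : (-v) i0 = c := by
      have : v i0 = -c := (Finset.mem_filter.mp hi0mem).2
      simp [this]
    have hfilter : (Finset.univ.filter (fun j => (-v) j = -c)) = S := by
      ext j
      simp only [hS, Finset.mem_filter, Finset.mem_univ, true_and, Pi.neg_apply,
        neg_eq_iff_eq_neg, neg_neg]
    have hm : ((Finset.univ.filter (fun j => (-v) j = -c)).card : ℝ) ≤ S.card := by
      rw [hfilter]
    have := stmt17_aux n w hw.le g hgb lam c hc (-v) hvals' heig' i0 hi0 S.card hm
    exact key S.card (by omega) this
  · -- impossible since n is odd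
    exfalso
    obtain ⟨t, ht⟩ := hodd
    omega
  · -- apply aux to v directly
    have hSne : S.Nonempty := by
      rw [← Finset.card_pos]; omega
    obtain ⟨i0, hi0mem⟩ := hSne
    have hi0 : v i0 = c := (Finset.mem_filter.mp hi0mem).2
    have hm : ((Finset.univ.filter (fun j => v j = -c)).card : ℝ) ≤ T.card := by
      rw [← hT]
    have := stmt17_aux n w hw.le g hgb lam c hc v hvals heig i0 hi0 T.card hm
    exact key T.card (by omega) this
end
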